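/- Let G be a K_4-free, K_{1,2,2}-free graph with no copy of \widehat{P}_4 (the suspension of the path with 4 edges). Suppose triangles xuv and yuv of G share the edge uv with x \ne y. Then exactly one of the pairs {xu, yv} and {xv, yu} consists of edges each lying in a unique triangle of G, and the edges of the other pair each lie in at least two triangles. -/

import Mathlib

open SimpleGraph

/-- `G` contains a copy of `H` (a subgraph isomorphic to `H`). -/
def containsCopy {W V : Type*} (H : SimpleGraph W) (G : SimpleGraph V) : Prop :=
  ∃ f : H →g G, Function.Injective f

/-- The number of triangles of `G`. -/
noncomputable def triCount {V : Type*} (G : SimpleGraph V) : ℕ :=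
  {s : Finset V | G.IsNClique 3 s}.ncard

/-- The number of edges of `G`. -/
noncomputable def edgeCount {V : Type*} (G : SimpleGraph V) : ℕ :=
  G.edgeSet.ncard

/-- The suspension `K_1 ∨ H` of a graph `H`: a new vertex (`none`) joined to all
vertices of `H`. -/
def susp {W : Type*} (H : SimpleGraph W) : SimpleGraph (Option W) where
  Adj a b :=
    match a, b with
    | some x, some y => H.Adj x y
    | some _, none => True
    | none, some _ => True
    | none, none => False
  symm := by
    constructor
    rintro (_ | x) (_ | y) h
    · exact h
    · trivial
    · trivial
    · exact h.symm
  loopless := by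
    constructor
    rintro (_ | x) h
    · exact h
    · exact H.loopless.irrefl x h

/-- The Turán number: maximum number of edges of an `H`-free graph on `n` vertices. -/
noncomputable def exNum (n : ℕ) {W : Type*} (H : SimpleGraph W) : ℕ :=
  sSup {m | ∃ G : SimpleGraph (Fin n), ¬ containsCopy H G ∧ edgeCount G = m}

/-- The codegree of the pair `a, b`: number of common neighbours. -/
noncomputable def codeg {V : Type*} (G : SimpleGraph V) (a b : V) : ℕ :=
  (G.neighborSet a ∩ G.neighborSet b).ncard

/-!
Since `G` is `K₄`-free, `x` and `y` are not adjacent. If `xu` and `yu` were both heavy, pick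
`w₁ ≠ v` in a second triangle on `xu` and `w₂ ≠ v` in a second triangle on `yu`: for `w₁ = w₂`
the vertices `u; x, y; v, w₁` span a `K_{1,2,2}`, otherwise `u` joined to the path
`w₁ x v y w₂` is a `\widehat{P}_4`. So `xu, yu` are not both heavy, and symmetrically neither are
`xv, yv`. As no triangle has two light edges, one of `xu, xv` and one of `yu, yv` is heavy, which
leaves exactly the two configurations of the statement.
-/

namespace SimpleGraph

variable {V W : Type*} {G : SimpleGraph V}

theorem containsCopy_iff_isContained {H : SimpleGraph W} : containsCopy H G ↔ H ⊑ G :=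
  ⟨fun ⟨f, hf⟩ => ⟨⟨f, hf⟩⟩, fun ⟨f⟩ => ⟨f.toHom, f.injective⟩⟩

theorem completeMultipartiteGraph_isContained {ι : Type*} {p : ι → Type*} (f : ∀ i, p i → V)
    (hf : ∀ i, Function.Injective (f i)) (hadj : ∀ i j, i ≠ j → ∀ a b, G.Adj (f i a) (f j b)) :
    completeMultipartiteGraph p ⊑ G := by
  refine ⟨⟨⟨fun a => f a.1 a.2, fun {a b} hab => hadj _ _ hab _ _⟩, ?_⟩⟩
  rintro ⟨i, a⟩ ⟨j, b⟩ h
  obtain rfl : i = j := by_contra fun hij => (hadj i j hij a b).ne h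
  exact congrArg (Sigma.mk i) (hf i h)

theorem completeMultipartiteGraph_one_two_two_isContained {u x y v w : V} (hxy : x ≠ y)
    (hvw : v ≠ w) (hux : G.Adj u x) (huy : G.Adj u y) (huv : G.Adj u v) (huw : G.Adj u w)
    (hxv : G.Adj x v) (hxw : G.Adj x w) (hyv : G.Adj y v) (hyw : G.Adj y w) :
    completeMultipartiteGraph ![Fin 1, Fin 2, Fin 2] ⊑ G := by
  refine completeMultipartiteGraph_isContained
    (fun | 0 => fun _ => u | 1 => ![x, y] | 2 => ![v, w]) ?_ ?_
  · intro i
    match i with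
    | 0 => exact Function.injective_of_subsingleton (α := Fin 1) _
    | 1 => exact Fin.cons_injective_iff.2 ⟨by simpa using hxy, Function.injective_of_subsingleton _⟩
    | 2 => exact Fin.cons_injective_iff.2 ⟨by simpa using hvw, Function.injective_of_subsingleton _⟩
  · intro i j hij
    match i, j with
    | 0, 0 | 1, 1 | 2, 2 => exact absurd rfl hij
    | 0, 1 => exact fun _ => Fin.forall_fin_two.2 ⟨hux, huy⟩
    | 0, 2 => exact fun _ => Fin.forall_fin_two.2 ⟨huv, huw⟩
    | 1, 0 => exact Fin.forall_fin_two.2 ⟨fun _ => hux.symm, fun _ => huy.symm⟩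
    | 2, 0 => exact Fin.forall_fin_two.2 ⟨fun _ => huv.symm, fun _ => huw.symm⟩
    | 1, 2 =>
      exact Fin.forall_fin_two.2
        ⟨Fin.forall_fin_two.2 ⟨hxv, hxw⟩, Fin.forall_fin_two.2 ⟨hyv, hyw⟩⟩
    | 2, 1 =>
      exact Fin.forall_fin_two.2
        ⟨Fin.forall_fin_two.2 ⟨hxv.symm, hyv.symm⟩, Fin.forall_fin_two.2 ⟨hxw.symm, hyw.symm⟩⟩

theorem susp_isContained {H : SimpleGraph W} (f : Copy H G) {u : V} (hu : ∀ a, G.Adj u (f a)) :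
    susp H ⊑ G := by
  refine ⟨⟨⟨fun a => a.elim u f, ?_⟩, ?_⟩⟩
  · rintro (_ | a) (_ | b) hab
    exacts [absurd hab id, hu b, (hu a).symm, f.toHom.map_adj hab]
  · rintro (_ | a) (_ | b) hab
    exacts [rfl, absurd hab (hu b).ne, absurd hab.symm (hu a).ne, congrArg some (f.injective hab)]

theorem susp_pathGraph_isContained {u a b : V} {p : G.Walk a b} (hp : p.IsPath)
    (hu : ∀ z ∈ p.support, G.Adj u z) : susp (pathGraph (p.length + 1)) ⊑ G := by
  classical
  exact susp_isContained hp.pathGraphCopy fun n => hu _ (List.getElem_mem _)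

theorem one_le_codeg [Finite V] {a b c : V} (hac : G.Adj a c) (hbc : G.Adj b c) :
    1 ≤ codeg G a b :=
  (Set.ncard_pos (Set.toFinite _)).2 ⟨c, hac, hbc⟩

theorem not_adj_of_cliqueFree_four (hG : G.CliqueFree 4) {u v x y : V} (huv : G.Adj u v)
    (hxu : G.Adj x u) (hxv : G.Adj x v) (hyu : G.Adj y u) (hyv : G.Adj y v) : ¬G.Adj x y := by
  classical
  intro hxy
  exact hG _ ((is3Clique_triple_iff.2 ⟨hyu, hyv, huv⟩).insert (a := x) (by simp [hxy, hxu, hxv]))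

theorem codeg_le_one_or_codeg_le_one
    (hK122 : (completeMultipartiteGraph ![Fin 1, Fin 2, Fin 2]).Free G)
    (hP4 : (susp (pathGraph 5)).Free G) {u v x y : V} (hxy : x ≠ y) (hnxy : ¬G.Adj x y)
    (huv : G.Adj u v) (hxu : G.Adj x u) (hxv : G.Adj x v) (hyu : G.Adj y u) (hyv : G.Adj y v) :
    codeg G x u ≤ 1 ∨ codeg G y u ≤ 1 := by
  by_contra! h
  obtain ⟨w₁, ⟨hxw₁ : G.Adj x w₁, huw₁ : G.Adj u w₁⟩, hw₁v⟩ := Set.exists_ne_of_one_lt_ncard h.1 v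
  obtain ⟨w₂, ⟨hyw₂ : G.Adj y w₂, huw₂ : G.Adj u w₂⟩, hw₂v⟩ := Set.exists_ne_of_one_lt_ncard h.2 v
  obtain rfl | hw := eq_or_ne w₁ w₂
  · exact hK122 (completeMultipartiteGraph_one_two_two_isContained hxy hw₁v.symm
      hxu.symm hyu.symm huv huw₁ hxv hxw₁ hyv hyw₂)
  · let p : G.Walk w₁ w₂ := .cons hxw₁.symm (.cons hxv (.cons hyv.symm (.cons hyw₂ .nil)))
    have hp : p.IsPath := by
      have hw₁y : w₁ ≠ y := by rintro rfl; exact hnxy hxw₁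
      have hxw₂ : x ≠ w₂ := by rintro rfl; exact hnxy hyw₂.symm
      simp [p, Walk.cons_isPath_iff, hxw₁.ne', hw₁v, hw₁y, hw, hxv.ne, hxy, hxw₂, hyv.ne',
        hw₂v.symm, hyw₂.ne]
    refine hP4 (susp_pathGraph_isContained (u := u) hp ?_)
    simp [p, huw₁, hxu.symm, huv, hyu.symm, huw₂]

end SimpleGraph

/-- In a `K_4`-free, `K_{1,2,2}`-free, `\widehat{P}_4`-free graph with no triangle
having two light edges: if triangles `xuv` and `yuv` share the edge `uv` (`x ≠ y`),
then exactly one of the pairs `{xu, yv}`, `{xv, yu}` consists of light edges, and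
the other pair consists of heavy edges. -/
theorem light_heavy_lemma {V : Type*} [Fintype V] (G : SimpleGraph V)
    (hK4 : ¬ containsCopy (⊤ : SimpleGraph (Fin 4)) G)
    (hK122 : ¬ containsCopy (completeMultipartiteGraph ![Fin 1, Fin 2, Fin 2]) G)
    (hP4 : ¬ containsCopy (susp (pathGraph 5)) G)
    (hNoTwoLight : ∀ a b c : V, G.Adj a b → G.Adj b c → G.Adj a c →
      ¬ (codeg G a b = 1 ∧ codeg G b c = 1) ∧
      ¬ (codeg G a b = 1 ∧ codeg G a c = 1) ∧
      ¬ (codeg G b c = 1 ∧ codeg G a c = 1))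
    (u v x y : V) (hxy : x ≠ y) (huv : G.Adj u v)
    (hxu : G.Adj x u) (hxv : G.Adj x v) (hyu : G.Adj y u) (hyv : G.Adj y v) :
    (codeg G x u = 1 ∧ codeg G y v = 1 ∧ 2 ≤ codeg G x v ∧ 2 ≤ codeg G y u) ∨
    (codeg G x v = 1 ∧ codeg G y u = 1 ∧ 2 ≤ codeg G x u ∧ 2 ≤ codeg G y v) := by
  rw [containsCopy_iff_isContained] at hK4 hK122 hP4
  have hnxy : ¬G.Adj x y := not_adj_of_cliqueFree_four
    (by simpa using cliqueFree_iff_top_free.2 hK4) huv hxu hxv hyu hyv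
  have hxu₁ := one_le_codeg hxv huv
  have hxv₁ := one_le_codeg hxu huv.symm
  have hyu₁ := one_le_codeg hyv huv
  have hyv₁ := one_le_codeg hyu huv.symm
  have hx := (hNoTwoLight x u v hxu huv hxv).2.1
  have hy := (hNoTwoLight y u v hyu huv hyv).2.1
  have hu := codeg_le_one_or_codeg_le_one hK122 hP4 hxy hnxy huv hxu hxv hyu hyv
  have hv := codeg_le_one_or_codeg_le_one hK122 hP4 hxy hnxy huv.symm hxv hxu hyv hyu
  omega
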